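/- Let a₁ > a₂ ≥ 0 be integers and let x ∈ [0, 2^{−a₂}). Then w_{2^{a₁}+2^{a₂},0,2}(x) = 2^{a₂/2}·w_{2^{a₁−a₂}+1,0,2}(2^{a₂}x), W_{2^{a₁}+2^{a₂},0,2}(x) = 2^{−a₂/2}·W_{2^{a₁−a₂}+1,0,2}(2^{a₂}x), and W̃_{2^{a₁}+2^{a₂},0,2}(x) = 2^{−3a₂/2}·W̃_{2^{a₁−a₂}+1,0,2}(2^{a₂}x). -/

import Mathlib

open scoped Classical
open MeasureTheory

noncomputable section

/-- The binary digit `ξ_{i+1}` of `x ∈ [0,1)`. -/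
def rdigit (x : ℝ) (i : ℕ) : ℕ := (⌊x * 2 ^ (i + 1)⌋).toNat % 2

/-- The `k`-th Walsh function in base `2`. -/
def walsh (k : ℕ) (x : ℝ) : ℝ :=
  (-1 : ℝ) ^ ∑ i ∈ Finset.range (Nat.size k), (Nat.testBit k i).toNat * rdigit x i

/-- The order-2 localized Walsh function `w_{k,m,2}` for `k = 2^{a₁} + 2^{a₂} ∈ N₂∖N₁`. -/
def locw (a₁ a₂ m : ℕ) (x : ℝ) : ℝ :=
  Real.sqrt (2 ^ a₂) *
    Set.indicator (Set.Ico ((m : ℝ) / 2 ^ a₂) (((m : ℝ) + 1) / 2 ^ a₂)) (fun _ => (1:ℝ)) x *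
    walsh (2 ^ a₁ + 2 ^ a₂) x

/-- The cumulated function `W_{k,m,2}`. -/
def Wcum (a₁ a₂ m : ℕ) (x : ℝ) : ℝ := ∫ y in (0:ℝ)..x, locw a₁ a₂ m y

/-- The twice cumulated function `W̃_{k,m,2}`. -/
def Wtil (a₁ a₂ m : ℕ) (x : ℝ) : ℝ := ∫ y in (0:ℝ)..x, Wcum a₁ a₂ m y

/-!
Multiplying by `2 ^ c` shifts binary digits by `c` places, so
`wal_{2^(a+c) + 2^(b+c)}(x) = wal_{2^a + 2^b}(2^c x)`, while the support `[0, 2^-(b+c))` of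
`w_{2^(a+c) + 2^(b+c), 0, 2}` is the preimage of `[0, 2^-b)`; this gives the identity for `w` with
the factor `2^(c/2)` coming from the normalisation. The identities for `W` and `W̃` follow by the
substitution `y = 2^c x`, each integration contributing a factor `2^-c`.
-/

lemma rdigit_two_pow_mul (a i : ℕ) (x : ℝ) : rdigit (2 ^ a * x) i = rdigit x (i + a) := by
  unfold rdigit
  rw [add_right_comm i a, pow_add (2:ℝ) (i + 1) a]
  ring_nf

lemma Nat.testBit_two_pow_add_two_pow {a b : ℕ} (h : b < a) (i : ℕ) :
    (2 ^ a + 2 ^ b).testBit i = (decide (a = i) || decide (b = i)) := by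
  have hlt : 2 ^ b < 2 ^ a := Nat.pow_lt_pow_right one_lt_two h
  rw [← mul_one (2 ^ a), Nat.two_pow_add_eq_or_of_lt hlt, Nat.testBit_or, mul_one,
    Nat.testBit_two_pow, Nat.testBit_two_pow]

lemma walsh_two_pow_add_two_pow {a b : ℕ} (h : b < a) (x : ℝ) :
    walsh (2 ^ a + 2 ^ b) x = (-1) ^ (rdigit x a + rdigit x b) := by
  have ha : a < Nat.size (2 ^ a + 2 ^ b) := Nat.lt_size.2 (Nat.le_add_right _ _)
  have hpair : ({a, b} : Finset ℕ) ⊆ Finset.range (Nat.size (2 ^ a + 2 ^ b)) := by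
    simp [Finset.insert_subset_iff, ha, h.trans ha]
  rw [walsh, ← Finset.sum_subset hpair, Finset.sum_pair h.ne']
  · simp [Nat.testBit_two_pow_add_two_pow h, h.ne, h.ne']
  · intro i _ hi
    simp only [Finset.mem_insert, Finset.mem_singleton, not_or] at hi
    simp [Nat.testBit_two_pow_add_two_pow h, Ne.symm hi.1, Ne.symm hi.2]

lemma walsh_two_pow_add_two_pow_mul {a b : ℕ} (h : b < a) (c : ℕ) (x : ℝ) :
    walsh (2 ^ (a + c) + 2 ^ (b + c)) x = walsh (2 ^ a + 2 ^ b) (2 ^ c * x) := by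
  rw [walsh_two_pow_add_two_pow h, walsh_two_pow_add_two_pow (by omega), rdigit_two_pow_mul,
    rdigit_two_pow_mul]

lemma locw_add_add {a b : ℕ} (h : b < a) (c : ℕ) (x : ℝ) :
    locw (a + c) (b + c) 0 x = Real.sqrt (2 ^ c) * locw a b 0 (2 ^ c * x) := by
  have hIco : Set.Ico (0 / 2 ^ (b + c)) (1 / 2 ^ (b + c)) =
      (2 ^ c * ·) ⁻¹' Set.Ico (0 / 2 ^ b : ℝ) (1 / 2 ^ b) := by
    rw [Set.preimage_const_mul_Ico₀ _ _ (by positivity), div_div, div_div, pow_add]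
  have hsqrt : Real.sqrt (2 ^ (b + c)) = Real.sqrt (2 ^ c) * Real.sqrt (2 ^ b) := by
    rw [pow_add, Real.sqrt_mul (by positivity), mul_comm]
  simp only [locw, Nat.cast_zero, zero_add, hIco, hsqrt, walsh_two_pow_add_two_pow_mul h]
  rw [← Set.indicator_comp_right (2 ^ c * ·)]
  simp only [Function.comp_def]
  ring

lemma integral_zero_of_eq_mul_comp_mul {f g : ℝ → ℝ} {s c : ℝ} (hc : c ≠ 0)
    (hfg : ∀ y, f y = s * g (c * y)) (x : ℝ) :
    ∫ y in (0:ℝ)..x, f y = s * c⁻¹ * ∫ y in (0:ℝ)..c * x, g y := by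
  simp only [hfg, intervalIntegral.integral_const_mul,
    intervalIntegral.integral_comp_mul_left g hc, mul_zero, smul_eq_mul, mul_assoc]

lemma Wcum_add_add {a b : ℕ} (h : b < a) (c : ℕ) (x : ℝ) :
    Wcum (a + c) (b + c) 0 x = (Real.sqrt (2 ^ c))⁻¹ * Wcum a b 0 (2 ^ c * x) := by
  have hsq : Real.sqrt (2 ^ c) * ((2:ℝ) ^ c)⁻¹ = (Real.sqrt (2 ^ c))⁻¹ := by
    rw [← div_eq_mul_inv, Real.sqrt_div_self', one_div]
  rw [Wcum, integral_zero_of_eq_mul_comp_mul (by positivity) (locw_add_add h c), hsq, Wcum]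

lemma Wtil_add_add {a b : ℕ} (h : b < a) (c : ℕ) (x : ℝ) :
    Wtil (a + c) (b + c) 0 x = (2 ^ c * Real.sqrt (2 ^ c))⁻¹ * Wtil a b 0 (2 ^ c * x) := by
  rw [Wtil, integral_zero_of_eq_mul_comp_mul (by positivity) (Wcum_add_add h c), Wtil, mul_inv,
    mul_comm (2 ^ c)⁻¹]

theorem stmt18 (a₁ a₂ : ℕ) (h : a₂ < a₁) :
    ∀ x ∈ Set.Ico (0:ℝ) (1 / 2 ^ a₂),
      locw a₁ a₂ 0 x = Real.sqrt (2 ^ a₂) * locw (a₁ - a₂) 0 0 (2 ^ a₂ * x) ∧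
      Wcum a₁ a₂ 0 x = (Real.sqrt (2 ^ a₂))⁻¹ * Wcum (a₁ - a₂) 0 0 (2 ^ a₂ * x) ∧
      Wtil a₁ a₂ 0 x = (2 ^ a₂ * Real.sqrt (2 ^ a₂))⁻¹ * Wtil (a₁ - a₂) 0 0 (2 ^ a₂ * x) := by
  intro x _
  obtain ⟨d, rfl⟩ : ∃ d, a₁ = d + a₂ := ⟨a₁ - a₂, by omega⟩
  have hd : 0 < d := by omega
  rw [Nat.add_sub_cancel]
  exact ⟨by simpa only [zero_add] using locw_add_add hd a₂ x,
    by simpa only [zero_add] using Wcum_add_add hd a₂ x,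
    by simpa only [zero_add] using Wtil_add_add hd a₂ x⟩

end
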